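/- Let Λ = ℤ[x^{±1}, y^{±1}], a ∈ ℤ, and consider the 2×2 matrix P over Λ with entries P_{11} = -1, P_{12} = a(x + y^{-1} - x y^{-1} - 1), P_{21} = a(x^{-1} + y - x^{-1}y - 1), P_{22} = a(x + x^{-1} + y + y^{-1} - x y^{-1} - x^{-1} y - 2) + 1. Then the cokernel of P: Λ² → Λ² is isomorphic to Λ/⟨f f̄⟩ where f = a(x + y^{-1} - x y^{-1} - 1) + 1 and f̄ = a(x^{-1} + y - x^{-1} y - 1) + 1. -/
import Mathlib


/-- The Laurent polynomial ring `ℤ[x^{±1}, y^{±1}]` as the group ring of `ℤ × ℤ`. -/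
abbrev LaurentTwo : Type := AddMonoidAlgebra ℤ (ℤ × ℤ)

/-- The monomial `x^a y^b`. -/
noncomputable def mono (a b : ℤ) : LaurentTwo := AddMonoidAlgebra.single (a, b) 1

/-- The cokernel of the presentation matrix
`[[-1, a(x + y⁻¹ - xy⁻¹ - 1)], [a(x⁻¹ + y - x⁻¹y - 1), a(x + x⁻¹ + y + y⁻¹ - xy⁻¹ - x⁻¹y - 2) + 1]]`
is isomorphic to `Λ/⟨f f̄⟩` with `f = a(x + y⁻¹ - xy⁻¹ - 1) + 1` and
`f̄ = a(x⁻¹ + y - x⁻¹y - 1) + 1`. -/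
theorem stmt_10 (a : ℤ)
    (P : Matrix (Fin 2) (Fin 2) LaurentTwo)
    (hP11 : P 0 0 = -1)
    (hP12 : P 0 1 = a • (mono 1 0 + mono 0 (-1) - mono 1 (-1) - 1))
    (hP21 : P 1 0 = a • (mono (-1) 0 + mono 0 1 - mono (-1) 1 - 1))
    (hP22 : P 1 1 = a • (mono 1 0 + mono (-1) 0 + mono 0 1 + mono 0 (-1)
      - mono 1 (-1) - mono (-1) 1 - 2) + 1)
    (f fbar : LaurentTwo)
    (hf : f = a • (mono 1 0 + mono 0 (-1) - mono 1 (-1) - 1) + 1)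
    (hfbar : fbar = a • (mono (-1) 0 + mono 0 1 - mono (-1) 1 - 1) + 1) :
    Nonempty (((Fin 2 → LaurentTwo) ⧸ LinearMap.range (Matrix.toLin' P)) ≃ₗ[LaurentTwo]
      (LaurentTwo ⧸ (Ideal.span {f * fbar} : Ideal LaurentTwo))) := by
  simp only [zsmul_eq_mul] at hP12 hP21 hP22 hf hfbar
  set I : Ideal LaurentTwo := Ideal.span {f * fbar} with hI
  -- the linear functional w ↦ w 1 + (fbar - 1) * w 0
  let g : (Fin 2 → LaurentTwo) →ₗ[LaurentTwo] LaurentTwo :=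
    { toFun := fun w => w 1 + (fbar - 1) * w 0
      map_add' := by intro w₁ w₂; simp [Pi.add_apply]; ring
      map_smul' := by intro c w; simp [Pi.smul_apply, smul_eq_mul]; ring }
  let ψ : (Fin 2 → LaurentTwo) →ₗ[LaurentTwo] LaurentTwo ⧸ I := I.mkQ.comp g
  have hψ : ∀ w, ψ w = I.mkQ (w 1 + (fbar - 1) * w 0) := fun w => rfl
  have hsurj : Function.Surjective ψ := by
    intro z
    obtain ⟨y, rfl⟩ := I.mkQ_surjective z
    refine ⟨fun i => if i = 1 then y else 0, ?_⟩
    simp [hψ]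
  have hmulVec : ∀ x : Fin 2 → LaurentTwo, ∀ i,
      P.mulVec x i = P i 0 * x 0 + P i 1 * x 1 := by
    intro x i
    simp [Matrix.mulVec, dotProduct, Fin.sum_univ_two]
  have key1 : P 1 0 + (fbar - 1) * P 0 0 = 0 := by
    rw [hP21, hP11, hfbar]; ring
  have key2 : P 1 1 + (fbar - 1) * P 0 1 = f * fbar := by
    rw [hP22, hP12, hf, hfbar]; ring
  have hker : LinearMap.ker ψ = LinearMap.range (Matrix.toLin' P) := by
    ext w
    simp only [LinearMap.mem_ker, LinearMap.mem_range]
    constructor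
    · intro hw
      rw [hψ, Submodule.mkQ_apply, Submodule.Quotient.mk_eq_zero, hI,
        Ideal.mem_span_singleton] at hw
      obtain ⟨t, ht⟩ := hw
      refine ⟨![t * (f - 1) - w 0, t], ?_⟩
      have hw1 : w 1 = f * fbar * t - (fbar - 1) * w 0 := by linear_combination ht
      funext i
      rw [Matrix.toLin'_apply, hmulVec]
      fin_cases i
      · simp only [Fin.zero_eta, Matrix.cons_val_zero, Matrix.cons_val_one, Matrix.head_cons]
        rw [hP11, hP12, hf]
        ring
      · simp only [Fin.mk_one, Matrix.cons_val_zero, Matrix.cons_val_one, Matrix.head_cons]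
        rw [hP21, hP22, hw1, hf, hfbar]
        ring
    · rintro ⟨x, rfl⟩
      rw [hψ, Submodule.mkQ_apply, Submodule.Quotient.mk_eq_zero, hI,
        Ideal.mem_span_singleton]
      rw [Matrix.toLin'_apply]
      refine ⟨x 1, ?_⟩
      calc P.mulVec x 1 + (fbar - 1) * P.mulVec x 0
          = (P 1 0 + (fbar - 1) * P 0 0) * x 0 + (P 1 1 + (fbar - 1) * P 0 1) * x 1 := by
            rw [hmulVec, hmulVec]; ring
        _ = f * fbar * x 1 := by rw [key1, key2]; ring
  exact ⟨(Submodule.quotEquivOfEq _ _ hker.symm).trans (LinearMap.quotKerEquivOfSurjective ψ hsurj)⟩
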